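/- For every event E, the lower probability satisfies P̲(E) ≤ Q̄(E): if P̲(E) = x, then for every a < x there is a strategy of Reality starting from capital a guaranteeing that E occurs and sup_n K_n ≤ 1, provided Skeptic keeps his capital nonnegative. -/

import Mathlib

open Filter Finset

/-- Capital process in the coin-tossing game with initial capital `a`. -/
def cap (a : ℝ) (p M x : ℕ → ℝ) : ℕ → ℝ
  | 0 => a
  | n + 1 => cap a p M x n + M n * (x n - p n)

/-- Forecaster's moves are probabilities in `[0,1]`. -/
def ValidP (p : ℕ → ℝ) : Prop := ∀ n, p n ∈ Set.Icc (0 : ℝ) 1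

/-- Reality's moves are in `{0,1}`. -/
def ValidX (x : ℕ → ℝ) : Prop := ∀ n, x n = 0 ∨ x n = 1

/-- A Skeptic strategy reads Forecaster's moves up to round `n` and Reality's
moves before round `n`. -/
def SAdapted (S : (ℕ → ℝ) → (ℕ → ℝ) → ℕ → ℝ) : Prop :=
  ∀ p p' x x' : ℕ → ℝ, ∀ n, (∀ k ≤ n, p k = p' k) → (∀ k < n, x k = x' k) →
    S p x n = S p' x' n

/-- A Reality strategy reads Forecaster's and Skeptic's moves up to round `n`. -/
def RAdapted (R : (ℕ → ℝ) → (ℕ → ℝ) → ℕ → ℝ) : Prop :=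
  ∀ p p' M M' : ℕ → ℝ, ∀ n, (∀ k ≤ n, p k = p' k) → (∀ k ≤ n, M k = M' k) →
    R p M n = R p' M' n

/-- Upper probability of an event `E` (a set of paths `(p, x)`). -/
noncomputable def UpperP (E : (ℕ → ℝ) → (ℕ → ℝ) → Prop) : ℝ :=
  sInf {a | ∃ S, SAdapted S ∧ ∀ p x, ValidP p → ValidX x →
    (∀ n, 0 ≤ cap a p (S p x) x n) ∧
    (E p x → ∀ ε : ℝ, 0 < ε → ∃ n, 1 - ε < cap a p (S p x) x n)}

/-- Lower probability. -/
noncomputable def LowerP (E : (ℕ → ℝ) → (ℕ → ℝ) → Prop) : ℝ :=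
  1 - UpperP (fun p x => ¬ E p x)

/-- The set of initial capitals `a` for which some Reality strategy guarantees
the event and keeps the capital at most 1, against every Forecaster and every
Skeptic keeping the capital nonnegative. -/
def QSet (E : (ℕ → ℝ) → (ℕ → ℝ) → Prop) : Set ℝ :=
  {a | ∃ R, RAdapted R ∧ ∀ p M : ℕ → ℝ, ValidP p →
    ValidX (R p M) ∧
    ((∀ n, 0 ≤ cap a p M (R p M) n) →
      (E p (R p M) ∧ ∀ n, cap a p M (R p M) n ≤ 1))}

noncomputable def UpperQ (E : (ℕ → ℝ) → (ℕ → ℝ) → Prop) : ℝ := sSup (QSet E)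

noncomputable def LowerQ (E : (ℕ → ℝ) → (ℕ → ℝ) → Prop) : ℝ :=
  1 - UpperQ (fun p x => ¬ E p x)

/-!
Given a Skeptic strategy `S` that starts from `a` and forces `¬E` in the sense of `UpperP`,
Reality answers any Skeptic `M` by playing against the combined stake `M + S`: she picks
`x n ∈ {0,1}` so that `(M n + S n) (x n - p n) ≤ 0`. Then the sum of the two capitals never
exceeds its initial value `b + a`. If `b < 1 - a` and `M` keeps his capital nonnegative,
`S`'s capital stays at most `b + a < 1`, so `S` fails to reach `1` and `E` must happen, while
`M`'s capital stays at most `b + a ≤ 1` because `S`'s capital is nonnegative. Hence every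
`b < 1 - a` lies in the set defining `Q̄(E)`.
-/

lemma cap_add (a b : ℝ) (p M N x : ℕ → ℝ) (n : ℕ) :
    cap a p M x n + cap b p N x n = cap (a + b) p (M + N) x n := by
  induction n with
  | zero => rfl
  | succ n ih => simp only [cap, ← ih, Pi.add_apply]; ring

lemma cap_le_of_forall_mul_nonpos {a : ℝ} {p M x : ℕ → ℝ}
    (h : ∀ k, M k * (x k - p k) ≤ 0) (n : ℕ) : cap a p M x n ≤ a := by
  induction n with
  | zero => exact le_rfl
  | succ n ih => rw [cap]; linarith [h n]

lemma cap_zero_stake (a : ℝ) (p x : ℕ → ℝ) (n : ℕ) : cap a p (fun _ => 0) x n = a := by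
  induction n with
  | zero => rfl
  | succ n ih => simp [cap, ih]

lemma mul_ite_sub_nonpos {s q : ℝ} (hq : q ∈ Set.Icc (0 : ℝ) 1) :
    s * ((if 0 ≤ s then 0 else 1) - q) ≤ 0 := by
  obtain ⟨hq0, hq1⟩ := hq
  split_ifs with hs
  · exact mul_nonpos_of_nonneg_of_nonpos hs (by linarith)
  · exact mul_nonpos_of_nonpos_of_nonneg (by linarith) (by linarith)

section Reality

variable (S : (ℕ → ℝ) → (ℕ → ℝ) → ℕ → ℝ)

/-- Only the past moves `k < n` are fed to `S`, which makes the recursion well founded; the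
dummy value `0` beyond `n` is irrelevant when `S` is adapted (`realityAgainst_eq`). -/
noncomputable def realityAgainst (p M : ℕ → ℝ) : ℕ → ℝ
  | n => by
    classical
    exact if 0 ≤ M n + S p (fun k => if h : k < n then realityAgainst p M k else 0) n
      then 0 else 1
decreasing_by exact h

lemma validX_realityAgainst (p M : ℕ → ℝ) : ValidX (realityAgainst S p M) := by
  intro n
  rw [realityAgainst]
  split_ifs <;> simp

variable {S}

lemma realityAgainst_eq (hS : SAdapted S) (p M : ℕ → ℝ) (n : ℕ) :
    realityAgainst S p M n =
      if 0 ≤ M n + S p (realityAgainst S p M) n then 0 else 1 := by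
  rw [realityAgainst]
  congr 3
  exact hS _ _ _ _ n (fun _ _ => rfl) (fun k hk => dif_pos hk)

lemma rAdapted_realityAgainst (hS : SAdapted S) : RAdapted (realityAgainst S) := by
  intro p p' M M' n
  induction n using Nat.strong_induction_on with
  | _ n ih =>
    intro hp hM
    have hpast : ∀ k < n, realityAgainst S p M k = realityAgainst S p' M' k := fun k hk =>
      ih k hk (fun j hj => hp j (hj.trans hk.le)) (fun j hj => hM j (hj.trans hk.le))
    rw [realityAgainst_eq hS, realityAgainst_eq hS, hM n le_rfl, hS _ _ _ _ n hp hpast]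

lemma cap_add_cap_realityAgainst_le (hS : SAdapted S) {p : ℕ → ℝ} (hp : ValidP p)
    (M : ℕ → ℝ) (a b : ℝ) (n : ℕ) :
    cap b p M (realityAgainst S p M) n +
      cap a p (S p (realityAgainst S p M)) (realityAgainst S p M) n ≤ b + a := by
  rw [cap_add]
  refine cap_le_of_forall_mul_nonpos (fun k => ?_) n
  rw [realityAgainst_eq hS p M k]
  exact mul_ite_sub_nonpos (hp k)

end Reality

def UpperPSet (E : (ℕ → ℝ) → (ℕ → ℝ) → Prop) : Set ℝ :=
  {a | ∃ S, SAdapted S ∧ ∀ p x, ValidP p → ValidX x →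
    (∀ n, 0 ≤ cap a p (S p x) x n) ∧
    (E p x → ∀ ε : ℝ, 0 < ε → ∃ n, 1 - ε < cap a p (S p x) x n)}

lemma upperP_eq_sInf (E : (ℕ → ℝ) → (ℕ → ℝ) → Prop) : UpperP E = sInf (UpperPSet E) := rfl

lemma one_mem_upperPSet (E : (ℕ → ℝ) → (ℕ → ℝ) → Prop) : 1 ∈ UpperPSet E := by
  refine ⟨fun _ _ _ => 0, fun _ _ _ _ _ _ _ => rfl, fun p x _ _ =>
    ⟨fun n => ?_, fun _ ε hε => ⟨0, ?_⟩⟩⟩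
  · rw [cap_zero_stake]; exact zero_le_one
  · rw [cap_zero_stake]; linarith

lemma qSet_bddAbove (E : (ℕ → ℝ) → (ℕ → ℝ) → Prop) : BddAbove (QSet E) := by
  refine ⟨1, fun b ⟨R, _, hR⟩ => ?_⟩
  by_contra! hb
  have hcap := (hR (fun _ => 0) (fun _ => 0) (fun _ => ⟨le_rfl, zero_le_one⟩)).2
  simp only [cap_zero_stake] at hcap
  linarith [(hcap fun _ => by linarith).2 0]

lemma mem_qSet_of_mem_upperPSet_compl {E : (ℕ → ℝ) → (ℕ → ℝ) → Prop} {a b : ℝ}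
    (ha : a ∈ UpperPSet (fun p x => ¬ E p x)) (hb : b < 1 - a) : b ∈ QSet E := by
  obtain ⟨S, hS, hSwin⟩ := ha
  refine ⟨realityAgainst S, rAdapted_realityAgainst hS, fun p M hp =>
    ⟨validX_realityAgainst S p M, fun hM => ?_⟩⟩
  obtain ⟨hSnonneg, hSforce⟩ := hSwin p _ hp (validX_realityAgainst S p M)
  have hsum := cap_add_cap_realityAgainst_le hS hp M a b
  refine ⟨?_, fun n => by linarith [hsum n, hSnonneg n]⟩
  by_contra hE
  obtain ⟨n, hn⟩ := hSforce hE (1 - a - b) (by linarith)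
  linarith [hsum n, hM n]

/-- For every event `E`, the lower probability is at most `Q̄(E)`. -/
theorem stmt_12 (E : (ℕ → ℝ) → (ℕ → ℝ) → Prop) : LowerP E ≤ UpperQ E := by
  rw [LowerP, UpperQ, upperP_eq_sInf, sub_le_comm]
  refine le_csInf ⟨1, one_mem_upperPSet _⟩ fun a ha => ?_
  rw [sub_le_comm]
  exact le_of_forall_lt_imp_le_of_dense fun b hb =>
    le_csSup (qSet_bddAbove E) (mem_qSet_of_mem_upperPSet_compl ha hb)
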